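/- arXiv:2403.09940 — 4 statements merged into one kernel-verified Lean document; each statement's English description precedes it below -/
import Mathlib

section
/- Let (Ω, ℱ, ℙ) be a probability space with a filtration (ℱ_k)_{k≥0}, and let (M_k)_{k=0}^n be an ℝ^d-valued martingale with respect to (ℱ_k) satisfying M_0 = 0 and ‖M_k − M_{k−1}‖ ≤ 1 almost surely for every 1 ≤ k ≤ n. Then for every δ > 0, ℙ(‖M_n‖ ≥ δ) ≤ 2e² · e^{−δ²/(2n)}. -/
/-!
For `‖y‖ ≤ 1` write `‖x + y‖² ≤ ‖x‖² + 2⟪x, y⟫ + 1` as a convex combination of `(‖x‖ - 1)²` and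
`(‖x‖ + 1)²`; since `s ↦ cosh (l √s)` is convex (its power series in `s` has nonnegative
coefficients), this gives Pinelis' inequality
`cosh (l ‖x + y‖) ≤ cosh l · cosh (l ‖x‖) + ⟪v x, y⟫` with `v x` depending on `x` only.
Along a martingale the linear term has zero expectation, so
`𝔼 cosh (l ‖M n‖) ≤ (cosh l)ⁿ ≤ exp (n l² / 2)`, and Markov's inequality for `cosh (l ‖M n‖)` with
`l = δ / n` yields `ℙ(‖M n‖ ≥ δ) ≤ 2 exp (-δ² / (2 n))`.
-/

open MeasureTheory Real Set
open scoped Nat InnerProductSpace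

namespace Real

lemma cosh_mul_le_cosh_mul (l : ℝ) {a b : ℝ} (ha : 0 ≤ a) (hab : a ≤ b) :
    cosh (l * a) ≤ cosh (l * b) := by
  rw [cosh_le_cosh, abs_mul, abs_mul, abs_of_nonneg ha, abs_of_nonneg (ha.trans hab)]
  gcongr

lemma convexOn_cosh_mul_sqrt (l : ℝ) : ConvexOn ℝ (Ici 0) fun s ↦ cosh (l * √s) := by
  have hasSum (s : ℝ) (hs : 0 ≤ s) :
      HasSum (fun n : ℕ ↦ (l ^ 2 * s) ^ n / (2 * n)!) (cosh (l * √s)) := by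
    simpa only [pow_mul, mul_pow, sq_sqrt hs] using hasSum_cosh (l * √s)
  refine ⟨convex_Ici 0, fun x (hx : 0 ≤ x) y (hy : 0 ≤ y) a b ha hb hab ↦ ?_⟩
  refine hasSum_le (fun n ↦ ?_) (hasSum _ (by positivity))
    (((hasSum x hx).mul_left a).add ((hasSum y hy).mul_left b))
  have hpow := (convexOn_pow n).2 (mem_Ici.2 (by positivity : 0 ≤ l ^ 2 * x))
    (mem_Ici.2 (by positivity : 0 ≤ l ^ 2 * y)) ha hb hab
  simp only [smul_eq_mul] at hpow ⊢
  calc (l ^ 2 * (a * x + b * y)) ^ n / (2 * n)!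
      = (a * (l ^ 2 * x) + b * (l ^ 2 * y)) ^ n / (2 * n)! := by ring_nf
    _ ≤ (a * (l ^ 2 * x) ^ n + b * (l ^ 2 * y) ^ n) / (2 * n)! := by gcongr
    _ = _ := by ring

lemma cosh_mul_sqrt_le {a t : ℝ} (ha : 0 < a) (ht : |t| ≤ a) (l : ℝ) :
    cosh (l * √(a ^ 2 + 2 * t + 1)) ≤
      cosh l * cosh (l * a) + t / a * (sinh l * sinh (l * a)) := by
  obtain ⟨ht₁, ht₂⟩ := abs_le.1 ht
  have hu : |t / a| ≤ 1 := by rw [abs_div, abs_of_pos ha]; exact div_le_one_of_le₀ ht ha.le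
  obtain ⟨hu₁, hu₂⟩ := abs_le.1 hu
  have hcomb :
      a ^ 2 + 2 * t + 1 = (1 - t / a) / 2 * (a - 1) ^ 2 + (1 + t / a) / 2 * (a + 1) ^ 2 := by
    field_simp
    ring
  have hconv := (convexOn_cosh_mul_sqrt l).2 (mem_Ici.2 (sq_nonneg (a - 1)))
    (mem_Ici.2 (sq_nonneg (a + 1))) (by linarith : 0 ≤ (1 - t / a) / 2)
    (by linarith : 0 ≤ (1 + t / a) / 2) (by ring)
  simp only [smul_eq_mul, ← hcomb, sqrt_sq_eq_abs, abs_of_pos (by linarith : 0 < a + 1)] at hconv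
  have hcosh : cosh (l * |a - 1|) = cosh (l * a - l) := by
    rw [← cosh_abs, abs_mul, abs_abs, ← abs_mul, cosh_abs, mul_sub, mul_one]
  rw [hcosh, mul_add, mul_one, cosh_sub, cosh_add] at hconv
  linear_combination hconv

end Real

section InnerProductSpace

variable {E : Type*} [NormedAddCommGroup E] [InnerProductSpace ℝ E]

lemma norm_sinh_mul_norm_div_norm_smul (l : ℝ) (x : E) :
    ‖(sinh (l * ‖x‖) / ‖x‖) • x‖ = |sinh (l * ‖x‖)| := by
  rcases eq_or_ne x 0 with rfl | hx
  · simp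
  · rw [norm_smul, norm_div, norm_norm, Real.norm_eq_abs,
      div_mul_cancel₀ _ (norm_ne_zero_iff.2 hx)]

lemma cosh_mul_norm_add_le (l : ℝ) (x : E) {y : E} (hy : ‖y‖ ≤ 1) :
    cosh (l * ‖x + y‖) ≤
      cosh l * cosh (l * ‖x‖) + sinh l * ⟪(sinh (l * ‖x‖) / ‖x‖) • x, y⟫_ℝ := by
  rcases eq_or_ne x 0 with rfl | hx
  · simpa using cosh_mul_le_cosh_mul l (norm_nonneg y) hy
  have ha : 0 < ‖x‖ := norm_pos_iff.2 hx
  have ht : |⟪x, y⟫_ℝ| ≤ ‖x‖ :=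
    (abs_real_inner_le_norm x y).trans (mul_le_of_le_one_right ha.le hy)
  have hnorm : ‖x + y‖ ≤ √(‖x‖ ^ 2 + 2 * ⟪x, y⟫_ℝ + 1) := by
    refine le_sqrt_of_sq_le ?_
    rw [norm_add_sq_real]
    nlinarith [norm_nonneg y]
  calc cosh (l * ‖x + y‖) ≤ cosh (l * √(‖x‖ ^ 2 + 2 * ⟪x, y⟫_ℝ + 1)) :=
        cosh_mul_le_cosh_mul l (norm_nonneg _) hnorm
    _ ≤ _ := cosh_mul_sqrt_le ha ht l
    _ = _ := by rw [real_inner_smul_left]; ring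

end InnerProductSpace

section

variable {Ω F : Type*} {m0 : MeasurableSpace Ω} {μ : Measure Ω} [SeminormedAddCommGroup F]

lemma ae_norm_le_of_norm_sub_le_one {X : ℕ → Ω → F} {n : ℕ}
    (h0 : ∀ᵐ ω ∂μ, X 0 ω = 0) (hinc : ∀ k < n, ∀ᵐ ω ∂μ, ‖X (k + 1) ω - X k ω‖ ≤ 1) :
    ∀ k ≤ n, ∀ᵐ ω ∂μ, ‖X k ω‖ ≤ k := by
  intro k
  induction k with
  | zero => exact fun _ ↦ by filter_upwards [h0] with ω hω using by simp [hω]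
  | succ k ih =>
    intro hk
    filter_upwards [ih (by omega), hinc k hk] with ω hprev hstep
    calc ‖X (k + 1) ω‖ ≤ ‖X k ω‖ + ‖X (k + 1) ω - X k ω‖ := norm_le_insert' _ _
      _ ≤ k + 1 := by linarith
      _ = ↑(k + 1) := by push_cast; ring

lemma integrable_cosh_mul_norm_of_ae_norm_le [IsFiniteMeasure μ] {X : Ω → F}
    (hX : AEStronglyMeasurable X μ) (l : ℝ) {C : ℝ} (hC : ∀ᵐ ω ∂μ, ‖X ω‖ ≤ C) :
    Integrable (fun ω ↦ cosh (l * ‖X ω‖)) μ := by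
  refine (integrable_const (cosh (l * C))).mono' (by fun_prop) ?_
  filter_upwards [hC] with ω hω
  rw [norm_of_nonneg (cosh_pos _).le]
  exact cosh_mul_le_cosh_mul l (norm_nonneg _) hω

lemma measureReal_norm_ge_le_exp_mul_integral_cosh [IsFiniteMeasure μ] {X : Ω → F} {l δ : ℝ}
    (hδ : 0 ≤ δ) (hint : Integrable (fun ω ↦ cosh (l * ‖X ω‖)) μ) :
    μ.real {ω | δ ≤ ‖X ω‖} ≤ 2 * exp (-(l * δ)) * ∫ ω, cosh (l * ‖X ω‖) ∂μ := by
  have hmarkov := mul_meas_ge_le_integral_of_nonneg (ae_of_all _ fun ω ↦ (cosh_pos _).le) hint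
    (cosh (l * δ))
  have hsub : μ.real {ω | δ ≤ ‖X ω‖} ≤ μ.real {ω | cosh (l * δ) ≤ cosh (l * ‖X ω‖)} :=
    measureReal_mono fun ω hω ↦ cosh_mul_le_cosh_mul l hδ hω
  have hcosh : exp (l * δ) / 2 ≤ cosh (l * δ) := by
    rw [cosh_eq]; linarith [exp_pos (-(l * δ))]
  calc μ.real {ω | δ ≤ ‖X ω‖}
        = 2 * exp (-(l * δ)) * (exp (l * δ) / 2 * μ.real {ω | δ ≤ ‖X ω‖}) := by
          rw [exp_neg]; field_simp
    _ ≤ 2 * exp (-(l * δ)) * ∫ ω, cosh (l * ‖X ω‖) ∂μ := by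
        gcongr
        calc exp (l * δ) / 2 * μ.real {ω | δ ≤ ‖X ω‖}
            ≤ cosh (l * δ) * μ.real {ω | cosh (l * δ) ≤ cosh (l * ‖X ω‖)} := by gcongr
          _ ≤ _ := hmarkov

end

namespace MeasureTheory.Martingale

variable {Ω E : Type*} {m0 : MeasurableSpace Ω} {μ : Measure Ω} [NormedAddCommGroup E]
  [InnerProductSpace ℝ E] [CompleteSpace E]

lemma integral_inner_sub_eq_zero [IsFiniteMeasure μ] {ι : Type*} [Preorder ι]
    {ℱ : Filtration ι m0} {M : ι → Ω → E} (hM : Martingale M ℱ μ) {i j : ι} (hij : i ≤ j)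
    {V : Ω → E} (hV : StronglyMeasurable[ℱ i] V)
    (hint : Integrable (fun ω ↦ ⟪V ω, M j ω - M i ω⟫_ℝ) μ) :
    ∫ ω, ⟪V ω, M j ω - M i ω⟫_ℝ ∂μ = 0 := by
  have hincrement : μ[M j - M i | ℱ i] =ᵐ[μ] 0 := by
    filter_upwards [condExp_sub (hM.integrable j) (hM.integrable i) (ℱ i), hM.condExp_ae_eq hij,
      hM.condExp_ae_eq (le_refl i)] with ω hsub hj hi
    simp [hsub, hj, hi]
  have hpull : μ[fun ω ↦ ⟪V ω, M j ω - M i ω⟫_ℝ | ℱ i]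
      =ᵐ[μ] fun ω ↦ ⟪V ω, μ[M j - M i | ℱ i] ω⟫_ℝ :=
    condExp_bilin_of_stronglyMeasurable_left (innerSL ℝ) hV hint
      ((hM.integrable j).sub (hM.integrable i))
  rw [← integral_condExp (ℱ.le i), integral_eq_zero_of_ae]
  filter_upwards [hpull, hincrement] with ω hω hzero
  rw [hω, hzero, Pi.zero_apply, inner_zero_right, Pi.zero_apply]

lemma integral_cosh_norm_succ_le [IsFiniteMeasure μ] {ℱ : Filtration ℕ m0}
    {M : ℕ → Ω → E} (hM : Martingale M ℱ μ) (l : ℝ) {k : ℕ}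
    (hint : Integrable (fun ω ↦ cosh (l * ‖M k ω‖)) μ)
    (hinc : ∀ᵐ ω ∂μ, ‖M (k + 1) ω - M k ω‖ ≤ 1) :
    ∫ ω, cosh (l * ‖M (k + 1) ω‖) ∂μ ≤ cosh l * ∫ ω, cosh (l * ‖M k ω‖) ∂μ := by
  set V : Ω → E := fun ω ↦ (sinh (l * ‖M k ω‖) / ‖M k ω‖) • M k ω
  have hMk : StronglyMeasurable[ℱ k] (M k) := hM.stronglyAdapted k
  have hV : StronglyMeasurable[ℱ k] V :=
    ((measurable_sinh.comp (measurable_const.mul hMk.norm.measurable)).div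
      hMk.norm.measurable).stronglyMeasurable.smul hMk
  have hcross : Integrable (fun ω ↦ ⟪V ω, M (k + 1) ω - M k ω⟫_ℝ) μ := by
    refine hint.mono' ?_ ?_
    · exact (hV.mono (ℱ.le k)).aestronglyMeasurable.inner
        ((hM.integrable _).sub (hM.integrable _)).aestronglyMeasurable
    · filter_upwards [hinc] with ω hω
      calc ‖⟪V ω, M (k + 1) ω - M k ω⟫_ℝ‖ ≤ ‖V ω‖ * ‖M (k + 1) ω - M k ω‖ :=
            norm_inner_le_norm _ _
        _ ≤ |sinh (l * ‖M k ω‖)| * 1 := by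
          rw [norm_sinh_mul_norm_div_norm_smul]; gcongr
        _ ≤ cosh (l * ‖M k ω‖) := by
          rw [mul_one, abs_sinh, ← cosh_abs (l * _)]; exact (sinh_lt_cosh _).le
  calc ∫ ω, cosh (l * ‖M (k + 1) ω‖) ∂μ
      ≤ ∫ ω, (cosh l * cosh (l * ‖M k ω‖) + sinh l * ⟪V ω, M (k + 1) ω - M k ω⟫_ℝ) ∂μ := by
        refine integral_mono_of_nonneg (ae_of_all _ fun ω ↦ (cosh_pos _).le)
          ((hint.const_mul _).add (hcross.const_mul _)) ?_
        filter_upwards [hinc] with ω hω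
        simpa using cosh_mul_norm_add_le l (M k ω) hω
    _ = cosh l * ∫ ω, cosh (l * ‖M k ω‖) ∂μ := by
        rw [integral_add (hint.const_mul _) (hcross.const_mul _), integral_const_mul,
          integral_const_mul, hM.integral_inner_sub_eq_zero k.le_succ hV hcross, mul_zero,
          add_zero]

lemma integral_cosh_norm_le [IsProbabilityMeasure μ]
    {ℱ : Filtration ℕ m0} {M : ℕ → Ω → E} (hM : Martingale M ℱ μ) (h0 : ∀ᵐ ω ∂μ, M 0 ω = 0)
    {n : ℕ} (hinc : ∀ k < n, ∀ᵐ ω ∂μ, ‖M (k + 1) ω - M k ω‖ ≤ 1) (l : ℝ) :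
    ∀ k ≤ n, ∫ ω, cosh (l * ‖M k ω‖) ∂μ ≤ cosh l ^ k := by
  intro k
  induction k with
  | zero =>
    intro _
    have hone : (fun ω ↦ cosh (l * ‖M 0 ω‖)) =ᵐ[μ] fun _ ↦ 1 := by
      filter_upwards [h0] with ω hω using by simp [hω]
    simp [integral_congr_ae hone]
  | succ k ih =>
    intro hk
    have hint := integrable_cosh_mul_norm_of_ae_norm_le (hM.integrable k).aestronglyMeasurable l
      (ae_norm_le_of_norm_sub_le_one h0 hinc k (by omega))
    calc ∫ ω, cosh (l * ‖M (k + 1) ω‖) ∂μ ≤ cosh l * ∫ ω, cosh (l * ‖M k ω‖) ∂μ :=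
          hM.integral_cosh_norm_succ_le l hint (hinc k hk)
      _ ≤ cosh l * cosh l ^ k := by gcongr; exact ih (by omega)
      _ = cosh l ^ (k + 1) := by ring

lemma measure_norm_ge_le [IsProbabilityMeasure μ]
    {ℱ : Filtration ℕ m0} {M : ℕ → Ω → E} (hM : Martingale M ℱ μ) (h0 : ∀ᵐ ω ∂μ, M 0 ω = 0)
    {n : ℕ} (hinc : ∀ k < n, ∀ᵐ ω ∂μ, ‖M (k + 1) ω - M k ω‖ ≤ 1) {δ : ℝ} (hδ : 0 ≤ δ) :
    μ {ω | δ ≤ ‖M n ω‖} ≤ ENNReal.ofReal (2 * exp (-δ ^ 2 / (2 * n))) := by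
  -- the Chernoff parameter `δ / n` minimises `n l ^ 2 / 2 - l δ`
  set l := δ / n
  have hint := integrable_cosh_mul_norm_of_ae_norm_le (hM.integrable n).aestronglyMeasurable l
    (ae_norm_le_of_norm_sub_le_one h0 hinc n le_rfl)
  have hexp : -(l * δ) + n * (l ^ 2 / 2) = -δ ^ 2 / (2 * n) := by
    rcases eq_or_ne (n : ℝ) 0 with hn | hn
    · simp [l, hn]
    · simp only [l]; field_simp; ring
  rw [← ofReal_measureReal]
  gcongr
  calc μ.real {ω | δ ≤ ‖M n ω‖} ≤ 2 * exp (-(l * δ)) * ∫ ω, cosh (l * ‖M n ω‖) ∂μ :=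
        measureReal_norm_ge_le_exp_mul_integral_cosh hδ hint
    _ ≤ 2 * exp (-(l * δ)) * exp (n * (l ^ 2 / 2)) := by
        gcongr
        calc ∫ ω, cosh (l * ‖M n ω‖) ∂μ ≤ cosh l ^ n :=
              hM.integral_cosh_norm_le h0 hinc l n le_rfl
          _ ≤ exp (l ^ 2 / 2) ^ n := by gcongr; exact cosh_le_exp_half_sq l
          _ = exp (n * (l ^ 2 / 2)) := (exp_nat_mul _ n).symm
    _ = 2 * exp (-δ ^ 2 / (2 * n)) := by rw [mul_assoc, ← exp_add, hexp]

end MeasureTheory.Martingale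

/-- Vector Azuma–Hoeffding inequality: if `(M_k)_{k=0}^n` is an `ℝ^d`-valued
martingale with `M₀ = 0` and `‖M_k − M_{k−1}‖ ≤ 1` a.s. for `1 ≤ k ≤ n`, then for every
`δ > 0`, `ℙ(‖M_n‖ ≥ δ) ≤ 2e² · e^{−δ²/(2n)}`. -/
theorem vector_azuma_hoeffding
    {Ω : Type*} {m0 : MeasurableSpace Ω} (μ : Measure Ω) [IsProbabilityMeasure μ]
    (ℱ : Filtration ℕ m0) (d : ℕ) (n : ℕ)
    (M : ℕ → Ω → EuclideanSpace ℝ (Fin d))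
    (hM : Martingale M ℱ μ)
    (h0 : ∀ᵐ ω ∂μ, M 0 ω = 0)
    (hdiff : ∀ k, 1 ≤ k → k ≤ n → ∀ᵐ ω ∂μ, ‖M k ω - M (k - 1) ω‖ ≤ 1)
    (δ : ℝ) (hδ : 0 < δ) :
    μ {ω | δ ≤ ‖M n ω‖} ≤
      ENNReal.ofReal (2 * Real.exp 2 * Real.exp (-δ ^ 2 / (2 * n))) := by
  have hinc : ∀ k < n, ∀ᵐ ω ∂μ, ‖M (k + 1) ω - M k ω‖ ≤ 1 := fun k hk ↦ by
    simpa using hdiff (k + 1) k.succ_pos hk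
  refine (hM.measure_norm_ge_le h0 hinc hδ.le).trans (ENNReal.ofReal_le_ofReal ?_)
  gcongr
  exact le_mul_of_one_le_right zero_le_two (one_le_exp zero_le_two)
end

section
/- Let (Ω, ℱ, ℙ) be a probability space with a filtration (ℱ_j)_{j≥0}, and let M_1, …, M_n be ℝ^d-valued random vectors such that each M_j is ℱ_j-measurable, 𝔼[M_j | ℱ_{j−1}] = 0 almost surely, and ‖M_j‖ ≤ C almost surely, where C > 0. Then for every ε > 0, ℙ( ‖(1/n) ∑_{j=1}^n M_j‖ ≥ ε ) ≤ 2e² · exp( −n ε² / (2C²) ). -/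
open MeasureTheory Real
open scoped RealInnerProductSpace Nat

section aux

lemma euclid_coord_le {d : ℕ} (x : EuclideanSpace ℝ (Fin d)) (i : Fin d) : |x i| ≤ ‖x‖ := by
  rw [EuclideanSpace.norm_eq, ← Real.sqrt_sq_eq_abs]
  apply Real.sqrt_le_sqrt
  have : x i ^ 2 = ‖x i‖ ^ 2 := by rw [Real.norm_eq_abs, sq_abs]
  rw [this]
  exact Finset.single_le_sum (fun j _ => sq_nonneg (‖x j‖)) (Finset.mem_univ i)


lemma cosh_mono_nonneg {p q : ℝ} (hp : 0 ≤ p) (hpq : p ≤ q) : Real.cosh p ≤ Real.cosh q :=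
  Real.cosh_le_cosh.2 (by rwa [abs_of_nonneg hp, abs_of_nonneg (hp.trans hpq)])

variable {E : Type*} [NormedAddCommGroup E] [InnerProductSpace ℝ E]


open Classical in
noncomputable def pinelisW (l : ℝ) (x : E) : E :=
  if x = 0 then 0 else (Real.sinh (l * ‖x‖) / ‖x‖) • x

lemma pinelisW_norm (l : ℝ) (x : E) : ‖pinelisW l x‖ = |Real.sinh (l * ‖x‖)| := by
  classical
  rw [pinelisW]
  split_ifs with h
  · simp [h]
  · have hx : (0:ℝ) < ‖x‖ := norm_pos_iff.2 h
    rw [norm_smul]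
    field_simp [abs_of_pos hx]
    rw [norm_div, norm_norm, Real.norm_eq_abs]
    field_simp

lemma cosh_sqrt_hasSum' (l : ℝ) (u : ℝ) (hu : 0 ≤ u) :
    HasSum (fun k : ℕ => (l ^ 2) ^ k * u ^ k / ((2 * k)! : ℝ)) (Real.cosh (l * Real.sqrt u)) := by
  have h := Real.hasSum_cosh (l * Real.sqrt u)
  convert h using 2 with k
  rw [mul_pow, pow_mul, pow_mul, Real.sq_sqrt hu]

lemma cosh_sqrt_chord (l : ℝ) {x y a b : ℝ} (hx : 0 ≤ x) (hy : 0 ≤ y)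
    (ha : 0 ≤ a) (hb : 0 ≤ b) (hab : a + b = 1) :
    Real.cosh (l * Real.sqrt (a * x + b * y)) ≤
      a * Real.cosh (l * Real.sqrt x) + b * Real.cosh (l * Real.sqrt y) := by
  have hxy : 0 ≤ a * x + b * y := by positivity
  refine hasSum_le (fun k => ?_) (cosh_sqrt_hasSum' l _ hxy)
    (((cosh_sqrt_hasSum' l x hx).mul_left a).add ((cosh_sqrt_hasSum' l y hy).mul_left b))
  have hpow : (a * x + b * y) ^ k ≤ a * x ^ k + b * y ^ k := by
    have := (convexOn_pow k).2 (Set.mem_Ici.2 hx) (Set.mem_Ici.2 hy) ha hb hab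
    simpa [smul_eq_mul] using this
  have hc : 0 ≤ (l ^ 2) ^ k / ((2 * k)! : ℝ) := by positivity
  calc (l ^ 2) ^ k * (a * x + b * y) ^ k / ((2 * k)! : ℝ)
      = ((l ^ 2) ^ k / ((2 * k)! : ℝ)) * (a * x + b * y) ^ k := by ring
    _ ≤ ((l ^ 2) ^ k / ((2 * k)! : ℝ)) * (a * x ^ k + b * y ^ k) :=
        mul_le_mul_of_nonneg_left hpow hc
    _ = a * ((l ^ 2) ^ k * x ^ k / ((2 * k)! : ℝ)) + b * ((l ^ 2) ^ k * y ^ k / ((2 * k)! : ℝ)) := by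
        ring

lemma pinelis_step (l : ℝ) (hl : 0 ≤ l) {C : ℝ} (hC : 0 < C)
    (x v : E) (hv : ‖v‖ ≤ C) :
    Real.cosh (l * ‖x + v‖) ≤ Real.cosh (l * ‖x‖) * Real.cosh (l * C)
      + (Real.sinh (l * C) / C) * ⟪pinelisW l x, v⟫ := by
  classical
  by_cases hx0 : x = 0
  · subst hx0
    rw [pinelisW, if_pos rfl]
    simp only [inner_zero_left, mul_zero, add_zero, zero_add, norm_zero, Real.cosh_zero, one_mul]
    exact cosh_mono_nonneg (by positivity) (mul_le_mul_of_nonneg_left hv hl)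
  · have ha : (0:ℝ) < ‖x‖ := norm_pos_iff.2 hx0
    set a : ℝ := ‖x‖ with ha_def
    set t : ℝ := ⟪x, v⟫ with ht_def
    have ht : |t| ≤ a * C :=
      (abs_real_inner_le_norm x v).trans (mul_le_mul_of_nonneg_left hv (norm_nonneg x))
    have ht1 : -(a*C) ≤ t := neg_le_of_abs_le ht
    have ht2 : t ≤ a*C := le_of_abs_le ht
    have hW : ⟪pinelisW l x, v⟫ = (Real.sinh (l * a) / a) * t := by
      rw [pinelisW, if_neg hx0, real_inner_smul_left]
    have h1 : Real.cosh (l * ‖x + v‖) = Real.cosh (l * Real.sqrt (a^2 + 2*t + ‖v‖^2)) := by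
      rw [← norm_add_sq_real, Real.sqrt_sq (norm_nonneg _)]
    have h2 : Real.cosh (l * Real.sqrt (a^2 + 2*t + ‖v‖^2))
        ≤ Real.cosh (l * Real.sqrt (a^2 + 2*t + C^2)) := by
      refine cosh_mono_nonneg (by positivity) ?_
      refine mul_le_mul_of_nonneg_left (Real.sqrt_le_sqrt ?_) hl
      nlinarith [sq_nonneg (‖v‖ - C), norm_nonneg v]
    set α : ℝ := (a*C - t)/(2*a*C) with hα_def
    set β : ℝ := (a*C + t)/(2*a*C) with hβ_def
    have hαβ : α + β = 1 := by
      rw [hα_def, hβ_def, ← add_div]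
      rw [div_eq_one_iff_eq (by positivity)]
      ring
    have hα : 0 ≤ α := by
      apply div_nonneg (by linarith) (by positivity)
    have hβ : 0 ≤ β := by
      apply div_nonneg (by linarith) (by positivity)
    have hu : a^2 + 2*t + C^2 = α * (a-C)^2 + β * (a+C)^2 := by
      rw [hα_def, hβ_def]
      field_simp
      ring
    have h3 := cosh_sqrt_chord l (x := (a-C)^2) (y := (a+C)^2) (sq_nonneg _) (sq_nonneg _) hα hβ hαβ
    rw [Real.sqrt_sq_eq_abs, Real.sqrt_sq (by positivity : (0:ℝ) ≤ a + C)] at h3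
    have habs : Real.cosh (l * |a - C|) = Real.cosh (l * a - l * C) := by
      rw [← Real.cosh_abs (l * a - l * C), ← mul_sub, abs_mul, abs_of_nonneg hl]
    have h4 : α * Real.cosh (l * |a-C|) + β * Real.cosh (l * (a+C))
        = Real.cosh (l * a) * Real.cosh (l * C) + (Real.sinh (l * C) / C) * ((Real.sinh (l * a) / a) * t) := by
      rw [habs, mul_add, Real.cosh_add, Real.cosh_sub, hα_def, hβ_def]
      field_simp
      ring
    calc Real.cosh (l * ‖x + v‖) = Real.cosh (l * Real.sqrt (a^2 + 2*t + ‖v‖^2)) := h1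
      _ ≤ Real.cosh (l * Real.sqrt (a^2 + 2*t + C^2)) := h2
      _ = Real.cosh (l * Real.sqrt (α * (a-C)^2 + β * (a+C)^2)) := by rw [← hu]
      _ ≤ α * Real.cosh (l * |a-C|) + β * Real.cosh (l * (a+C)) := h3
      _ = _ := by rw [h4, hW]


lemma measurable_pinelisW {E : Type*} [NormedAddCommGroup E] [InnerProductSpace ℝ E]
    [MeasurableSpace E] [BorelSpace E] (l : ℝ) : Measurable (pinelisW l : E → E) := by
  classical
  unfold pinelisW
  refine Measurable.ite ?_ measurable_const ?_
  · exact MeasurableSet.congr (measurableSet_singleton (0:E)) (by ext x; simp)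
  · exact ((measurable_norm.const_mul l).sinh.div measurable_norm).smul measurable_id

end aux



open MeasureTheory

/-- concentration for averages of bounded martingale difference sequences.
If `M₁, …, M_n` are `ℝ^d`-valued, each `M_j` is `ℱ_j`-measurable with
`𝔼[M_j | ℱ_{j−1}] = 0` a.s. and `‖M_j‖ ≤ C` a.s., then for every `ε > 0`,
`ℙ(‖(1/n) ∑_{j=1}^n M_j‖ ≥ ε) ≤ 2e² exp(−n ε² / (2C²))`. -/
theorem mds_average_concentration
    {Ω : Type*} {m0 : MeasurableSpace Ω} (μ : Measure Ω) [IsProbabilityMeasure μ]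
    (ℱ : Filtration ℕ m0) (d : ℕ) (n : ℕ) (hn : 1 ≤ n)
    (M : ℕ → Ω → EuclideanSpace ℝ (Fin d))
    (hint : ∀ j, 1 ≤ j → j ≤ n → Integrable (M j) μ)
    (hadapted : ∀ j, 1 ≤ j → j ≤ n → StronglyMeasurable[ℱ j] (M j))
    (hmds : ∀ j, 1 ≤ j → j ≤ n → μ[M j | ℱ (j - 1)] =ᵐ[μ] 0)
    (C : ℝ) (hC : 0 < C)
    (hbound : ∀ j, 1 ≤ j → j ≤ n → ∀ᵐ ω ∂μ, ‖M j ω‖ ≤ C)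
    (ε : ℝ) (hε : 0 < ε) :
    μ {ω | ε ≤ ‖(1 / (n : ℝ)) • ∑ j ∈ Finset.Icc 1 n, M j ω‖} ≤
      ENNReal.ofReal (2 * Real.exp 2 * Real.exp (-((n : ℝ) * ε ^ 2) / (2 * C ^ 2))) := by
  classical
  set l : ℝ := ε / C ^ 2 with hl_def
  have hl : 0 < l := by positivity
  set S : ℕ → Ω → EuclideanSpace ℝ (Fin d) := fun k ω => ∑ j ∈ Finset.Icc 1 k, M j ω with hS_def
  -- basic measurability
  have hMmeas : ∀ j, 1 ≤ j → j ≤ n → AEStronglyMeasurable (M j) μ := fun j h1 h2 =>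
    ((hadapted j h1 h2).mono (ℱ.le j)).aestronglyMeasurable
  have hSmeas : ∀ k, k ≤ n → StronglyMeasurable[ℱ k] (S k) := by
    intro k hk
    apply Finset.stronglyMeasurable_fun_sum
    intro j hj
    rw [Finset.mem_Icc] at hj
    exact (hadapted j hj.1 (hj.2.trans hk)).mono (ℱ.mono hj.2)
  have hSaesm : ∀ k, k ≤ n → AEStronglyMeasurable (S k) μ := fun k hk =>
    ((hSmeas k hk).mono (ℱ.le k)).aestronglyMeasurable
  -- a.e. bounds
  have hball : ∀ᵐ ω ∂μ, ∀ j, 1 ≤ j → j ≤ n → ‖M j ω‖ ≤ C := by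
    rw [ae_all_iff]
    intro j
    by_cases h : 1 ≤ j ∧ j ≤ n
    · filter_upwards [hbound j h.1 h.2] with ω hω _ _ using hω
    · filter_upwards with ω h1 h2 using absurd ⟨h1, h2⟩ h
  have hSb : ∀ᵐ ω ∂μ, ∀ k, k ≤ n → ‖S k ω‖ ≤ k * C := by
    filter_upwards [hball] with ω hω k hk
    calc ‖S k ω‖ ≤ ∑ j ∈ Finset.Icc 1 k, ‖M j ω‖ := norm_sum_le _ _
      _ ≤ ∑ j ∈ Finset.Icc 1 k, C := by
          apply Finset.sum_le_sum
          intro j hj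
          rw [Finset.mem_Icc] at hj
          exact hω j hj.1 (hj.2.trans hk)
      _ = k * C := by
          rw [Finset.sum_const, Nat.card_Icc]
          simp [nsmul_eq_mul]
  -- integrability of cosh of norms
  have hg_int : ∀ k, k ≤ n → Integrable (fun ω => Real.cosh (l * ‖S k ω‖)) μ := by
    intro k hk
    have haesm : AEStronglyMeasurable (fun ω => Real.cosh (l * ‖S k ω‖)) μ :=
      (Real.continuous_cosh.comp_aestronglyMeasurable ((hSaesm k hk).norm.const_mul l))
    refine Integrable.mono' (integrable_const (Real.cosh (l * (k * C)))) haesm ?_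
    filter_upwards [hSb] with ω hω
    rw [Real.norm_eq_abs, abs_of_pos (Real.cosh_pos _)]
    refine Real.cosh_le_cosh.2 ?_
    rw [abs_of_nonneg (by positivity), abs_of_nonneg (by positivity)]
    exact mul_le_mul_of_nonneg_left (hω k hk) hl.le
  -- coordinates of M have zero conditional expectation
  have hcoord : ∀ k, k < n → ∀ i : Fin d,
      μ[(fun ω => M (k+1) ω i) | ℱ k] =ᵐ[μ] 0 := by
    intro k hk i
    have h1 : 1 ≤ k + 1 := Nat.succ_le_succ (Nat.zero_le k)
    have h2 : k + 1 ≤ n := hk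
    have hm : ℱ k ≤ m0 := ℱ.le k
    have hMk : Integrable (M (k+1)) μ := hint (k+1) h1 h2
    have hMi : Integrable (fun ω => M (k+1) ω i) μ :=
      (EuclideanSpace.proj i : EuclideanSpace ℝ (Fin d) →L[ℝ] ℝ).integrable_comp hMk
    have hmds' : μ[M (k+1) | ℱ k] =ᵐ[μ] 0 := by
      have := hmds (k+1) h1 h2
      simpa using this
    have h0 : (fun _ : Ω => (0:ℝ)) =ᵐ[μ] μ[(fun ω => M (k+1) ω i) | ℱ k] := by
      refine ae_eq_condExp_of_forall_setIntegral_eq hm hMi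
        (fun s _ _ => integrableOn_zero) ?_ ?_
      · intro s hs hμs
        have hres : IntegrableOn (M (k+1)) s μ := hMk.integrableOn
        have h1' : ∫ x in s, M (k+1) x i ∂μ
            = (EuclideanSpace.proj i : EuclideanSpace ℝ (Fin d) →L[ℝ] ℝ) (∫ x in s, M (k+1) x ∂μ) := by
          have := (EuclideanSpace.proj i :
            EuclideanSpace ℝ (Fin d) →L[ℝ] ℝ).integral_comp_comm hres
          simpa using this
        have h2' : ∫ x in s, M (k+1) x ∂μ = 0 := by
          rw [← setIntegral_condExp hm hMk hs]
          rw [setIntegral_congr_ae (hm s hs) (hmds'.mono fun ω hω _ => hω)]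
          simp
        rw [h1', h2']
        simp
      · exact stronglyMeasurable_const.aestronglyMeasurable
    exact h0.symm
  -- the key inner-product integral vanishes
  have hzero : ∀ k, k < n →
      ∫ ω, ⟪pinelisW l (S k ω), M (k+1) ω⟫ ∂μ = 0 := by
    intro k hk
    have hm : ℱ k ≤ m0 := ℱ.le k
    have h1 : 1 ≤ k + 1 := Nat.succ_le_succ (Nat.zero_le k)
    have hMk : Integrable (M (k+1)) μ := hint (k+1) h1 hk
    set W : Ω → EuclideanSpace ℝ (Fin d) := fun ω => pinelisW l (S k ω) with hW_def
    have hWmeas : StronglyMeasurable[ℱ k] W :=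
      ((measurable_pinelisW l).comp (hSmeas k hk.le).measurable).stronglyMeasurable
    have hWaesm : AEStronglyMeasurable W μ := (hWmeas.mono hm).aestronglyMeasurable
    have hWb : ∀ᵐ ω ∂μ, ‖W ω‖ ≤ Real.sinh (l * (k * C)) := by
      filter_upwards [hSb] with ω hω
      rw [hW_def]
      simp only []
      rw [pinelisW_norm, abs_of_nonneg (Real.sinh_nonneg_iff.2 (by positivity))]
      exact Real.sinh_le_sinh.2 (mul_le_mul_of_nonneg_left (hω k hk.le) hl.le)
    have hinner : ∀ ω, ⟪W ω, M (k+1) ω⟫ = ∑ i, W ω i * M (k+1) ω i := by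
      intro ω
      simp [PiLp.inner_apply, RCLike.inner_apply, conj_trivial]
      exact Finset.sum_congr rfl fun _ _ => mul_comm _ _
    have hgi : ∀ i : Fin d, Integrable (fun ω => M (k+1) ω i) μ := by
      intro i
      have := (EuclideanSpace.proj i :
        EuclideanSpace ℝ (Fin d) →L[ℝ] ℝ).integrable_comp hMk
      simpa using this
    have hWib : ∀ i : Fin d, ∀ᵐ ω ∂μ, ‖W ω i‖ ≤ Real.sinh (l * (k * C)) := by
      intro i
      filter_upwards [hWb] with ω hω
      rw [Real.norm_eq_abs]
      exact (euclid_coord_le _ i).trans hω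
    have hterm_int : ∀ i : Fin d, Integrable (fun ω => W ω i * M (k+1) ω i) μ := by
      intro i
      refine Integrable.bdd_mul (hgi i) ?_ (hWib i)
      exact (EuclideanSpace.proj i).continuous.comp_aestronglyMeasurable hWaesm
    have hterm_zero : ∀ i : Fin d, ∫ ω, W ω i * M (k+1) ω i ∂μ = 0 := by
      intro i
      have hfi : StronglyMeasurable[ℱ k] (fun ω => W ω i) :=
        (EuclideanSpace.proj i).continuous.comp_stronglyMeasurable hWmeas
      have hpull := condExp_stronglyMeasurable_mul_of_bound hm hfi (hgi i)
        (Real.sinh (l * (k * C))) (hWib i)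
      have hczero : μ[(fun ω => M (k+1) ω i)|ℱ k] =ᵐ[μ] 0 := hcoord k hk i
      have hprodzero : μ[(fun ω => W ω i) * (fun ω => M (k+1) ω i)|ℱ k] =ᵐ[μ] 0 :=
        hpull.trans (by filter_upwards [hczero] with ω hω; simp [hω])
      have heq : ∫ ω, W ω i * M (k+1) ω i ∂μ
          = ∫ ω, (μ[(fun ω => W ω i) * (fun ω => M (k+1) ω i)|ℱ k]) ω ∂μ :=
        (integral_condExp hm).symm
      rw [heq, integral_congr_ae hprodzero]
      simp
    calc ∫ ω, ⟪W ω, M (k+1) ω⟫ ∂μ = ∫ ω, ∑ i, W ω i * M (k+1) ω i ∂μ := by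
          simp_rw [hinner]
      _ = ∑ i, ∫ ω, W ω i * M (k+1) ω i ∂μ :=
          integral_finset_sum _ (fun i _ => hterm_int i)
      _ = 0 := by simp [hterm_zero]
  -- integrability of the inner product term
  have hZint : ∀ k, k < n →
      Integrable (fun ω => ⟪pinelisW l (S k ω), M (k+1) ω⟫) μ := by
    intro k hk
    have hm : ℱ k ≤ m0 := ℱ.le k
    have h1 : 1 ≤ k + 1 := Nat.succ_le_succ (Nat.zero_le k)
    have hWaesm : AEStronglyMeasurable (fun ω => pinelisW l (S k ω)) μ :=
      (((measurable_pinelisW l).comp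
        (hSmeas k hk.le).measurable).stronglyMeasurable.mono hm).aestronglyMeasurable
    refine Integrable.mono' (integrable_const (Real.sinh (l * (k * C)) * C))
      (hWaesm.inner (hMmeas (k+1) h1 hk)) ?_
    filter_upwards [hSb, hball] with ω hω hb
    rw [Real.norm_eq_abs]
    refine (abs_real_inner_le_norm _ _).trans ?_
    have hWn : ‖pinelisW l (S k ω)‖ ≤ Real.sinh (l * (k * C)) := by
      rw [pinelisW_norm, abs_of_nonneg (Real.sinh_nonneg_iff.2 (by positivity))]
      exact Real.sinh_le_sinh.2 (mul_le_mul_of_nonneg_left (hω k hk.le) hl.le)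
    exact mul_le_mul hWn (hb (k+1) h1 hk) (norm_nonneg _)
      (Real.sinh_nonneg_iff.2 (by positivity))
  -- main induction: exponential moment bound
  have main : ∀ k, k ≤ n → ∫ ω, Real.cosh (l * ‖S k ω‖) ∂μ ≤ Real.cosh (l * C) ^ k := by
    intro k
    induction k with
    | zero =>
      intro _
      have hS0 : ∀ ω, S 0 ω = 0 := by
        intro ω
        rw [hS_def]
        simp
      simp only [hS0, norm_zero, mul_zero, Real.cosh_zero, pow_zero]
      simp
    | succ k ih =>
      intro hk1
      have hkn : k < n := Nat.lt_of_succ_le hk1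
      have hk : k ≤ n := hkn.le
      have ihk := ih hk
      have hSsucc : ∀ ω, S (k+1) ω = S k ω + M (k+1) ω := by
        intro ω
        rw [hS_def]
        exact Finset.sum_Icc_succ_top (Nat.succ_le_succ (Nat.zero_le k)) _
      have hstep : ∀ᵐ ω ∂μ, Real.cosh (l * ‖S (k+1) ω‖) ≤
          Real.cosh (l * ‖S k ω‖) * Real.cosh (l * C)
            + (Real.sinh (l * C) / C) * ⟪pinelisW l (S k ω), M (k+1) ω⟫ := by
        filter_upwards [hball] with ω hω
        rw [hSsucc ω]
        exact pinelis_step l hl.le hC _ _ (hω (k+1) (Nat.succ_le_succ (Nat.zero_le k)) hkn)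
      have hrhs_int : Integrable (fun ω => Real.cosh (l * ‖S k ω‖) * Real.cosh (l * C)
          + (Real.sinh (l * C) / C) * ⟪pinelisW l (S k ω), M (k+1) ω⟫) μ :=
        ((hg_int k hk).mul_const _).add ((hZint k hkn).const_mul _)
      calc ∫ ω, Real.cosh (l * ‖S (k+1) ω‖) ∂μ
          ≤ ∫ ω, (Real.cosh (l * ‖S k ω‖) * Real.cosh (l * C)
            + (Real.sinh (l * C) / C) * ⟪pinelisW l (S k ω), M (k+1) ω⟫) ∂μ :=
            integral_mono_ae (hg_int (k+1) hk1) hrhs_int hstep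
        _ = (∫ ω, Real.cosh (l * ‖S k ω‖) ∂μ) * Real.cosh (l * C)
            + (Real.sinh (l * C) / C) * ∫ ω, ⟪pinelisW l (S k ω), M (k+1) ω⟫ ∂μ := by
            rw [integral_add ((hg_int k hk).mul_const _) ((hZint k hkn).const_mul _),
              integral_mul_const, integral_const_mul]
        _ = (∫ ω, Real.cosh (l * ‖S k ω‖) ∂μ) * Real.cosh (l * C) := by
            rw [hzero k hkn]
            ring
        _ ≤ Real.cosh (l * C) ^ k * Real.cosh (l * C) :=
            mul_le_mul_of_nonneg_right ihk (Real.cosh_pos _).le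
        _ = Real.cosh (l * C) ^ (k+1) := (pow_succ _ _).symm
  -- Markov / Chernoff step
  have key := main n le_rfl
  have hn' : (0:ℝ) < n := by exact_mod_cast Nat.lt_of_lt_of_le Nat.zero_lt_one hn
  set c : ℝ := Real.cosh (l * ((n:ℝ) * ε)) with hc_def
  have hcpos : 0 < c := Real.cosh_pos _
  have hsub : {ω | ε ≤ ‖(1 / (n : ℝ)) • S n ω‖} ⊆
      {ω | c ≤ Real.cosh (l * ‖S n ω‖)} := by
    intro ω hω
    simp only [Set.mem_setOf_eq] at hω ⊢
    have hω' : ε ≤ 1 / (n:ℝ) * ‖S n ω‖ := by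
      rwa [norm_smul, Real.norm_eq_abs, abs_of_pos (by positivity : (0:ℝ) < 1 / n)] at hω
    have hna : (n:ℝ) * ε ≤ ‖S n ω‖ := by
      have h' := mul_le_mul_of_nonneg_left hω' hn'.le
      have heq : (n:ℝ) * (1 / n * ‖S n ω‖) = ‖S n ω‖ := by field_simp
      linarith [heq ▸ h']
    exact cosh_mono_nonneg (by positivity) (mul_le_mul_of_nonneg_left hna hl.le)
  have hmarkov := mul_meas_ge_le_integral_of_nonneg
    (μ := μ) (f := fun ω => Real.cosh (l * ‖S n ω‖))
    (Filter.Eventually.of_forall fun ω => (Real.cosh_pos _).le) (hg_int n le_rfl) c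
  have htr : (μ {ω | c ≤ Real.cosh (l * ‖S n ω‖)}).toReal ≤ Real.cosh (l * C) ^ n / c := by
    rw [le_div_iff₀ hcpos]
    calc (μ {ω | c ≤ Real.cosh (l * ‖S n ω‖)}).toReal * c
        = c * (μ {ω | c ≤ Real.cosh (l * ‖S n ω‖)}).toReal := mul_comm _ _
      _ ≤ ∫ ω, Real.cosh (l * ‖S n ω‖) ∂μ := hmarkov
      _ ≤ Real.cosh (l * C) ^ n := key
  have hfin : Real.cosh (l * C) ^ n / c ≤
      2 * Real.exp 2 * Real.exp (-((n : ℝ) * ε ^ 2) / (2 * C ^ 2)) := by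
    have hc1 : Real.exp (l * ((n:ℝ) * ε)) / 2 ≤ c := by
      rw [hc_def, Real.cosh_eq]
      have := (Real.exp_pos (-(l * ((n:ℝ) * ε)))).le
      linarith
    rw [div_le_iff₀ hcpos]
    have hE : (n:ℝ) * ((l*C)^2/2) = l * ((n:ℝ) * ε) + -((n : ℝ) * ε ^ 2) / (2 * C ^ 2) := by
      rw [hl_def]
      field_simp
      ring
    have h2le : (1:ℝ) ≤ Real.exp 2 := Real.one_le_exp (by norm_num)
    calc Real.cosh (l*C) ^ n ≤ Real.exp ((l*C)^2/2) ^ n :=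
          pow_le_pow_left₀ (Real.cosh_pos _).le (Real.cosh_le_exp_half_sq _) n
      _ = Real.exp ((n:ℝ) * ((l*C)^2/2)) := by rw [← Real.exp_nat_mul]
      _ = Real.exp (-((n : ℝ) * ε ^ 2) / (2 * C ^ 2)) * Real.exp (l * ((n:ℝ) * ε)) := by
          rw [hE, add_comm, Real.exp_add]
      _ ≤ (Real.exp 2 * Real.exp (-((n : ℝ) * ε ^ 2) / (2 * C ^ 2)))
            * Real.exp (l * ((n:ℝ) * ε)) := by
          have ha := (Real.exp_pos (-((n : ℝ) * ε ^ 2) / (2 * C ^ 2))).le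
          have hb := (Real.exp_pos (l * ((n:ℝ) * ε))).le
          nlinarith [mul_nonneg ha hb]
      _ = (2 * Real.exp 2 * Real.exp (-((n : ℝ) * ε ^ 2) / (2 * C ^ 2)))
            * (Real.exp (l * ((n:ℝ) * ε)) / 2) := by ring
      _ ≤ (2 * Real.exp 2 * Real.exp (-((n : ℝ) * ε ^ 2) / (2 * C ^ 2))) * c := by
          apply mul_le_mul_of_nonneg_left hc1 (by positivity)
  show μ {ω | ε ≤ ‖(1 / (n : ℝ)) • S n ω‖} ≤ _
  calc μ {ω | ε ≤ ‖(1 / (n : ℝ)) • S n ω‖}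
      ≤ μ {ω | c ≤ Real.cosh (l * ‖S n ω‖)} := measure_mono hsub
    _ = ENNReal.ofReal ((μ {ω | c ≤ Real.cosh (l * ‖S n ω‖)}).toReal) :=
        (ENNReal.ofReal_toReal (measure_ne_top _ _)).symm
    _ ≤ ENNReal.ofReal (2 * Real.exp 2 * Real.exp (-((n : ℝ) * ε ^ 2) / (2 * C ^ 2))) :=
        ENNReal.ofReal_le_ofReal (htr.trans hfin)
end

section
/- Let τ ≥ 2 be an integer and let (r_t)_{t≥0} and (β_t)_{t≥0} be sequences of nonnegative real numbers satisfying r_{t+1} ≤ (1 − 2/(t+τ)) r_t + β_t for all t ≥ 0. Then for all integers 0 ≤ t_0 ≤ T, r_T ≤ (t_0 + τ − 1)² r_{t_0} / (T + τ − 1)² + ( ∑_{t=t_0}^{T−1} β_t (t+τ)² ) / (T + τ − 1)². -/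
/-!
Multiplying the recursion at step `t` by `(t+τ-1)(t+τ)` turns the contraction factor into the
telescoping weight `w(t) = (t+τ-2)(t+τ-1)`, so `w(T) r_T ≤ w(t₀) r_{t₀} + ∑ β_t (t+τ-1)(t+τ)`.
Dividing by `w(T)`, each ratio `(u-1)u / ((v-1)v)` with `u ≤ v` is at most `u² / v²`.
-/

open Finset

lemma mul_le_of_le_contraction {s a b c : ℝ} (hs : 1 ≤ s) (h : c ≤ (1 - 2 / s) * a + b) :
    s * (s - 1) * c ≤ (s - 2) * (s - 1) * a + b * ((s - 1) * s) :=
  calc s * (s - 1) * c ≤ s * (s - 1) * ((1 - 2 / s) * a + b) :=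
        mul_le_mul_of_nonneg_left h (by nlinarith)
    _ = (s - 2) * (s - 1) * a + b * ((s - 1) * s) := by
        field_simp

lemma weighted_telescope {τ : ℝ} (hτ : 1 ≤ τ) {r β : ℕ → ℝ}
    (hrec : ∀ t : ℕ, r (t + 1) ≤ (1 - 2 / ((t : ℝ) + τ)) * r t + β t) {t₀ N : ℕ} (hN : t₀ ≤ N) :
    ((N : ℝ) + τ - 2) * ((N : ℝ) + τ - 1) * r N ≤
      ((t₀ : ℝ) + τ - 2) * ((t₀ : ℝ) + τ - 1) * r t₀ +
        ∑ t ∈ Ico t₀ N, β t * (((t : ℝ) + τ - 1) * ((t : ℝ) + τ)) := by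
  induction N, hN using Nat.le_induction with
  | base => simp
  | succ n hn ih =>
    have hstep := mul_le_of_le_contraction (by linarith [(n.cast_nonneg : (0 : ℝ) ≤ n)]) (hrec n)
    rw [sum_Ico_succ_top hn]
    calc ((n + 1 : ℕ) + τ - 2) * ((n + 1 : ℕ) + τ - 1) * r (n + 1)
        = ((n : ℝ) + τ) * ((n : ℝ) + τ - 1) * r (n + 1) := by push_cast; ring
      _ ≤ _ := hstep
      _ ≤ _ := by linarith

lemma sub_one_mul_div_sub_one_mul_le_sq_div_sq {u v : ℝ} (hu : 0 ≤ u) (huv : u ≤ v)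
    (hv : 1 < v) : (u - 1) * u / ((v - 1) * v) ≤ u ^ 2 / v ^ 2 := by
  rw [div_le_div_iff₀ (by nlinarith) (by positivity)]
  nlinarith [mul_nonneg (mul_nonneg hu (hu.trans huv)) (sub_nonneg.2 huv)]

/-- Lemma 12 of Fatkhullin et al.: if `r_{t+1} ≤ (1 − 2/(t+τ)) r_t + β_t`
for nonnegative sequences with `τ ≥ 2`, then for all `t₀ ≤ T`,
`r_T ≤ (t₀+τ−1)² r_{t₀}/(T+τ−1)² + (∑_{t=t₀}^{T−1} β_t (t+τ)²)/(T+τ−1)²`. -/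
theorem recursive_sequence_bound
    (τ : ℕ) (hτ : 2 ≤ τ) (r β : ℕ → ℝ)
    (hr : ∀ t, 0 ≤ r t) (hβ : ∀ t, 0 ≤ β t)
    (hrec : ∀ t : ℕ, r (t + 1) ≤ (1 - 2 / ((t : ℝ) + τ)) * r t + β t) :
    ∀ t₀ T : ℕ, t₀ ≤ T →
      r T ≤ ((t₀ : ℝ) + τ - 1) ^ 2 * r t₀ / ((T : ℝ) + τ - 1) ^ 2 +
        (∑ t ∈ Finset.Ico t₀ T, β t * ((t : ℝ) + τ) ^ 2) / ((T : ℝ) + τ - 1) ^ 2 := by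
  intro t₀ T hT
  have hτR : (2 : ℝ) ≤ τ := by exact_mod_cast hτ
  rcases hT.eq_or_lt with rfl | hlt
  · have : (0 : ℝ) < t₀ + τ - 1 := by linarith [(t₀.cast_nonneg : (0 : ℝ) ≤ t₀)]
    simp [this.ne']
  have hTt : (t₀ : ℝ) + 1 ≤ T := by exact_mod_cast hlt
  have ht₀ : (0 : ℝ) ≤ t₀ := t₀.cast_nonneg
  have hw : (0 : ℝ) < (T + τ - 2) * (T + τ - 1) := by nlinarith
  have key := weighted_telescope (by linarith) hrec hT
  calc r T ≤ ((t₀ + τ - 2) * (t₀ + τ - 1) * r t₀ +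
        ∑ t ∈ Ico t₀ T, β t * ((t + τ - 1) * (t + τ))) / ((T + τ - 2) * (T + τ - 1)) :=
        (le_div_iff₀ hw).2 (by linarith)
    _ = (t₀ + τ - 1 - 1) * (t₀ + τ - 1) / ((T + τ - 1 - 1) * (T + τ - 1)) * r t₀ +
        ∑ t ∈ Ico t₀ T, β t * ((t + τ - 1) * (t + τ) / ((T + τ - 1 - 1) * (T + τ - 1))) := by
        rw [add_div, sum_div]
        congr 1
        · ring
        · exact sum_congr rfl fun t _ => by ring
    _ ≤ (t₀ + τ - 1) ^ 2 / (T + τ - 1) ^ 2 * r t₀ +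
        ∑ t ∈ Ico t₀ T, β t * ((t + τ) ^ 2 / (T + τ - 1) ^ 2) := by
        refine add_le_add (mul_le_mul_of_nonneg_right ?_ (hr t₀))
          (sum_le_sum fun t ht => mul_le_mul_of_nonneg_left ?_ (hβ t))
        · exact sub_one_mul_div_sub_one_mul_le_sq_div_sq (by linarith) (by linarith) (by linarith)
        · have htT : (t : ℝ) + 1 ≤ T := by exact_mod_cast (mem_Ico.1 ht).2
          exact sub_one_mul_div_sub_one_mul_le_sq_div_sq (by positivity) (by linarith)
            (by linarith)
    _ = _ := by
        rw [sum_div]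
        congr 1
        · ring
        · exact sum_congr rfl fun t _ => by ring
end

section
/- Let (Ω, ℱ, ℙ) be a probability space, d ≥ 1, N ≥ 1, f < N/2, λ ≥ 0, C > 0, and ε̄ > 0. Let D^{(1)}, …, D^{(N)} be ℝ^d-valued random vectors, G ⊆ {1, …, N} a set of size N − f, g ∈ ℝ^d a fixed vector, and D̄ = (1/(N−f)) ∑_{i∈G} D^{(i)}. Let Y be an ℝ^d-valued random vector such that almost surely ‖Y − D̄‖ ≤ λ max_{i,j∈G} ‖D^{(i)} − D^{(j)}‖. Assume that for every i ∈ G, ‖D^{(i)} − g‖ ≤ C almost surely and ℙ(‖D^{(i)} − g‖ ≥ ε̄) ≤ p. Then 𝔼[‖Y − D̄‖] ≤ 2Cλ(N−f)p + 2λε̄. -/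
/-!
By the triangle inequality through `g`, the diameter of the honest estimates is at most twice
their largest deviation `M = max_{i ∈ G} ‖D⁽ⁱ⁾ − g‖`, so `𝔼‖Y − D̄‖ ≤ 2λ 𝔼[M]`. Pointwise,
`M ≤ ε̄ + C · #{i ∈ G | ‖D⁽ⁱ⁾ − g‖ ≥ ε̄}`: either no deviation reaches `ε̄`, or the largest one is
at most `C` and is counted. Taking expectations turns the count into `∑_{i ∈ G} ℙ(‖D⁽ⁱ⁾ − g‖ ≥ ε̄)`,
a union-bound quantity of size at most `(N − f) p`.
-/

namespace Finset

variable {ι : Type*} {s : Finset ι}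

theorem sup'_sup'_norm_sub_le_two_mul {E : Type*} [SeminormedAddCommGroup E] (hs : s.Nonempty)
    (x : ι → E) (g : E) :
    s.sup' hs (fun i => s.sup' hs fun j => ‖x i - x j‖) ≤ 2 * s.sup' hs fun i => ‖x i - g‖ := by
  refine sup'_le _ _ fun i hi => sup'_le _ _ fun j hj => ?_
  have hi' := le_sup' (fun i => ‖x i - g‖) hi
  have hj' := le_sup' (fun i => ‖x i - g‖) hj
  have := norm_sub_le_norm_sub_add_norm_sub (x i) g (x j)
  rw [norm_sub_rev g] at this
  linarith

theorem sup'_le_add_mul_card_filter (hs : s.Nonempty) (a : ι → ℝ) {C ε : ℝ} (hε : 0 ≤ ε)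
    (haC : ∀ i ∈ s, a i ≤ C) :
    s.sup' hs a ≤ ε + C * #{i ∈ s | ε ≤ a i} := by
  obtain ⟨i, hi, hmax⟩ := exists_mem_eq_sup' hs a
  rw [hmax]
  by_cases hεi : ε ≤ a i
  · have hcard : (1 : ℝ) ≤ #{i ∈ s | ε ≤ a i} := by
      exact_mod_cast card_pos.mpr ⟨i, mem_filter.mpr ⟨hi, hεi⟩⟩
    nlinarith [haC i hi]
  · -- a nonempty count forces `C ≥ ε ≥ 0`
    have hC : 0 ≤ C * #{i ∈ s | ε ≤ a i} := by
      rcases ({i ∈ s | ε ≤ a i} : Finset ι).eq_empty_or_nonempty with h | ⟨j, hj⟩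
      · simp [h]
      · obtain ⟨hjs, hεj⟩ := mem_filter.mp hj
        exact mul_nonneg (hε.trans (hεj.trans (haC j hjs))) (Nat.cast_nonneg _)
    linarith

end Finset

namespace MeasureTheory

variable {Ω ι : Type*} [MeasurableSpace Ω] {μ : Measure Ω} {s : Finset ι} {X : ι → Ω → ℝ} {C : ℝ}

theorem integrable_finset_sup'_of_ae_le [IsFiniteMeasure μ] (hs : s.Nonempty)
    (hX : ∀ i ∈ s, Measurable (X i)) (hX0 : ∀ i, 0 ≤ X i) (hXC : ∀ i ∈ s, ∀ᵐ ω ∂μ, X i ω ≤ C) :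
    Integrable (s.sup' hs X) μ := by
  refine .of_bound (Finset.measurable_sup' hs hX).aestronglyMeasurable C ?_
  filter_upwards [(Finset.eventually_all s).mpr hXC] with ω hω
  obtain ⟨i, hi, hmax⟩ := Finset.exists_mem_eq_sup' hs (X · ω)
  rw [Finset.sup'_apply, hmax, Real.norm_of_nonneg (hX0 i ω)]
  exact hω i hi

theorem integral_finset_sup'_le_add_mul_sum [IsProbabilityMeasure μ] (hs : s.Nonempty)
    (hX : ∀ i ∈ s, Measurable (X i)) (hX0 : ∀ i, 0 ≤ X i) (hXC : ∀ i ∈ s, ∀ᵐ ω ∂μ, X i ω ≤ C)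
    {ε : ℝ} (hε : 0 ≤ ε) :
    ∫ ω, s.sup' hs X ω ∂μ ≤ ε + C * ∑ i ∈ s, μ.real {ω | ε ≤ X i ω} := by
  have hmeas : ∀ i ∈ s, MeasurableSet {ω | ε ≤ X i ω} := fun i hi =>
    measurableSet_le measurable_const (hX i hi)
  have hind : ∀ i ∈ s, Integrable ({ω | ε ≤ X i ω}.indicator (1 : Ω → ℝ)) μ := fun i hi =>
    (integrable_const (1 : ℝ)).indicator (hmeas i hi)
  have hcount_int := (integrable_finsetSum s hind).const_mul C
  have hcount : ∀ᵐ ω ∂μ,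
      s.sup' hs X ω ≤ ε + C * ∑ i ∈ s, {ω | ε ≤ X i ω}.indicator (1 : Ω → ℝ) ω := by
    filter_upwards [(Finset.eventually_all s).mpr hXC] with ω hω
    rw [Finset.sup'_apply]
    refine (Finset.sup'_le_add_mul_card_filter hs (X · ω) hε hω).trans_eq ?_
    simp only [Finset.natCast_card_filter, Set.indicator_apply, Set.mem_ofPred_eq, Pi.one_apply]
  calc ∫ ω, s.sup' hs X ω ∂μ
      ≤ ∫ ω, ε + C * ∑ i ∈ s, {ω | ε ≤ X i ω}.indicator (1 : Ω → ℝ) ω ∂μ :=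
        integral_mono_ae (integrable_finset_sup'_of_ae_le hs hX hX0 hXC)
          ((integrable_const ε).add hcount_int) hcount
    _ = ε + C * ∑ i ∈ s, μ.real {ω | ε ≤ X i ω} := by
        rw [integral_add (integrable_const ε) hcount_int,
          integral_const, integral_const_mul, integral_finsetSum s hind]
        simp [Finset.sum_congr rfl fun i hi => integral_indicator_one (μ := μ) (hmeas i hi)]

end MeasureTheory

open MeasureTheory

theorem expected_aggregation_error_bound_general
    {Ω : Type*} [MeasurableSpace Ω] (μ : Measure Ω) [IsProbabilityMeasure μ]
    (d N f : ℕ) (hf : 2 * f < N)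
    (lam : ℝ) (hlam : 0 ≤ lam) (C : ℝ) (hC : 0 < C) (eps : ℝ) (heps : 0 < eps)
    (D : Fin N → Ω → EuclideanSpace ℝ (Fin d)) (hDmeas : ∀ i, Measurable (D i))
    (G : Finset (Fin N)) (hGcard : G.card = N - f) (hGne : G.Nonempty)
    (g : EuclideanSpace ℝ (Fin d))
    (Y : Ω → EuclideanSpace ℝ (Fin d))
    (hres : ∀ᵐ ω ∂μ,
      ‖Y ω - ((N : ℝ) - f)⁻¹ • ∑ i ∈ G, D i ω‖ ≤
        lam * G.sup' hGne (fun i => G.sup' hGne fun j => ‖D i ω - D j ω‖))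
    (p : ℝ)
    (hbound : ∀ i ∈ G, ∀ᵐ ω ∂μ, ‖D i ω - g‖ ≤ C)
    (hprob : ∀ i ∈ G, (μ {ω | eps ≤ ‖D i ω - g‖}).toReal ≤ p) :
    ∫ ω, ‖Y ω - ((N : ℝ) - f)⁻¹ • ∑ i ∈ G, D i ω‖ ∂μ ≤
      2 * C * lam * ((N : ℝ) - f) * p + 2 * lam * eps := by
  set X : Fin N → Ω → ℝ := fun i ω => ‖D i ω - g‖
  have hX : ∀ i ∈ G, Measurable (X i) := fun i _ => ((hDmeas i).sub measurable_const).norm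
  have hX0 : ∀ i, 0 ≤ X i := fun i ω => norm_nonneg _
  have hdev : ∀ᵐ ω ∂μ, ‖Y ω - ((N : ℝ) - f)⁻¹ • ∑ i ∈ G, D i ω‖ ≤ 2 * lam * G.sup' hGne X ω := by
    filter_upwards [hres] with ω hω
    rw [Finset.sup'_apply, mul_assoc, mul_left_comm]
    exact hω.trans (mul_le_mul_of_nonneg_left
      (Finset.sup'_sup'_norm_sub_le_two_mul hGne (D · ω) g) hlam)
  have hunion : ∑ i ∈ G, μ.real {ω | eps ≤ X i ω} ≤ ((N : ℝ) - f) * p := by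
    calc ∑ i ∈ G, μ.real {ω | eps ≤ X i ω} ≤ ∑ _i ∈ G, p := Finset.sum_le_sum hprob
      _ = ((N : ℝ) - f) * p := by rw [Finset.sum_const, nsmul_eq_mul, hGcard, Nat.cast_sub (by omega)]
  calc ∫ ω, ‖Y ω - ((N : ℝ) - f)⁻¹ • ∑ i ∈ G, D i ω‖ ∂μ
      ≤ ∫ ω, 2 * lam * G.sup' hGne X ω ∂μ :=
        integral_mono_of_nonneg (.of_forall fun _ => norm_nonneg _)
          ((integrable_finset_sup'_of_ae_le hGne hX hX0 hbound).const_mul _) hdev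
    _ = 2 * lam * ∫ ω, G.sup' hGne X ω ∂μ := integral_const_mul _ _
    _ ≤ 2 * lam * (eps + C * (((N : ℝ) - f) * p)) := by
        gcongr
        exact (integral_finset_sup'_le_add_mul_sum hGne hX hX0 hbound heps.le).trans
          (add_le_add_right (mul_le_mul_of_nonneg_left hunion hC.le) _)
    _ = 2 * C * lam * ((N : ℝ) - f) * p + 2 * lam * eps := by ring

/-- expected aggregation error bound. If the aggregator output `Y` is a.s.
within `λ · max_{i,j∈G} ‖D⁽ⁱ⁾ − D⁽ʲ⁾‖` of the honest average `D̄`, each honest estimate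
satisfies `‖D⁽ⁱ⁾ − g‖ ≤ C` a.s. and `ℙ(‖D⁽ⁱ⁾ − g‖ ≥ ε̄) ≤ p`, then
`𝔼[‖Y − D̄‖] ≤ 2Cλ(N−f)p + 2λε̄`. -/
theorem expected_aggregation_error_bound
    {Ω : Type*} [MeasurableSpace Ω] (μ : Measure Ω) [IsProbabilityMeasure μ]
    (d N f : ℕ) (hd : 1 ≤ d) (hN : 1 ≤ N) (hf : 2 * f < N)
    (lam : ℝ) (hlam : 0 ≤ lam) (C : ℝ) (hC : 0 < C) (eps : ℝ) (heps : 0 < eps)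
    (D : Fin N → Ω → EuclideanSpace ℝ (Fin d)) (hDmeas : ∀ i, Measurable (D i))
    (G : Finset (Fin N)) (hGcard : G.card = N - f) (hGne : G.Nonempty)
    (g : EuclideanSpace ℝ (Fin d))
    (Y : Ω → EuclideanSpace ℝ (Fin d)) (hYmeas : Measurable Y)
    (hres : ∀ᵐ ω ∂μ,
      ‖Y ω - ((N : ℝ) - f)⁻¹ • ∑ i ∈ G, D i ω‖ ≤
        lam * G.sup' hGne (fun i => G.sup' hGne fun j => ‖D i ω - D j ω‖))
    (p : ℝ)
    (hbound : ∀ i ∈ G, ∀ᵐ ω ∂μ, ‖D i ω - g‖ ≤ C)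
    (hprob : ∀ i ∈ G, (μ {ω | eps ≤ ‖D i ω - g‖}).toReal ≤ p) :
    ∫ ω, ‖Y ω - ((N : ℝ) - f)⁻¹ • ∑ i ∈ G, D i ω‖ ∂μ ≤
      2 * C * lam * ((N : ℝ) - f) * p + 2 * lam * eps :=
  expected_aggregation_error_bound_general μ d N f hf lam hlam C hC eps heps D hDmeas G hGcard hGne
    g Y hres p hbound hprob
end
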